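/- arXiv:2103.11787 — 3 statements merged into one kernel-verified Lean document; each statement's English description precedes it below -/
import Mathlib

section
/- If 0 < ρ < 1 and 0 < v < 1 satisfy ρv/(1-ρ) + v²/(1+v)² ≤ 1/4, then 2ρ + 4v(1-ρ)/(1+v)² ≤ (1-ρ-2ρv)/v. -/
/-! Clearing denominators turns the hypothesis and the conclusion into the same polynomial
inequality `4ρv(1+v)² + 4v²(1-ρ) ≤ (1-ρ)(1+v)²`, so the two are in fact equivalent. -/

section ClearDenominators

variable {ρ v a s : ℝ}

lemma mul_div_add_sq_div_le_quarter_iff (ha : 0 < a) (hs : 0 < s) :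
    ρ * v / a + v ^ 2 / s ≤ 1 / 4 ↔ 4 * ρ * v * s + 4 * v ^ 2 * a ≤ a * s := by
  rw [div_add_div _ _ ha.ne' hs.ne', div_le_div_iff₀ (by positivity) (by norm_num)]
  constructor <;> intro h <;> linarith

lemma add_div_le_sub_div_iff (hs : 0 < s) (hv : 0 < v) :
    2 * ρ + 4 * v * a / s ≤ (a - 2 * ρ * v) / v ↔ 4 * ρ * v * s + 4 * v ^ 2 * a ≤ a * s := by
  rw [add_div' _ _ _ hs.ne', div_le_div_iff₀ hs hv]
  constructor <;> intro h <;> linarith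

end ClearDenominators

theorem stmt_1_general (ρ v : ℝ) (hρ1 : ρ < 1) (hv : 0 < v)
    (h : ρ * v / (1 - ρ) + v ^ 2 / (1 + v) ^ 2 ≤ 1 / 4) :
    2 * ρ + 4 * v * (1 - ρ) / (1 + v) ^ 2 ≤ (1 - ρ - 2 * ρ * v) / v := by
  have hs : 0 < (1 + v) ^ 2 := by positivity
  exact (add_div_le_sub_div_iff hs hv).2
    ((mul_div_add_sq_div_le_quarter_iff (sub_pos.2 hρ1) hs).1 h)

theorem stmt_1 (ρ v : ℝ) (hρ : 0 < ρ) (hρ1 : ρ < 1) (hv : 0 < v) (hv1 : v < 1)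
    (h : ρ * v / (1 - ρ) + v ^ 2 / (1 + v) ^ 2 ≤ 1 / 4) :
    2 * ρ + 4 * v * (1 - ρ) / (1 + v) ^ 2 ≤ (1 - ρ - 2 * ρ * v) / v :=
  stmt_1_general ρ v hρ1 hv h
end

section
/- For any 0 < ρ < 1 and 0 < v < 1 satisfying ρv/(1-ρ) + v²/(1+v)² ≤ 1/4, it holds that v < (1-ρ)/(1+ρ). -/
/-!
The left-hand side of the hypothesis is increasing in `v`. At the threshold
`v₀ = (1 - ρ) / (1 + ρ)` we have `v₀ / (1 + v₀) = (1 - ρ) / 2`, so its two terms become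
`ρ / (1 + ρ)` and `((1 - ρ) / 2) ^ 2`, whose sum exceeds `1 / 4` by
`ρ (ρ² - ρ + 2) / (4 (1 + ρ)) > 0`. Hence `v ≥ v₀` contradicts the hypothesis.
-/

lemma div_one_add_self_le_div_one_add_self {a b : ℝ} (ha : 0 ≤ a) (hab : a ≤ b) :
    a / (1 + a) ≤ b / (1 + b) := by
  rw [div_le_div_iff₀ (by positivity) (by linarith)]
  linarith

lemma threshold_div_one_add_self {ρ : ℝ} (hρ : 1 + ρ ≠ 0) :
    (1 - ρ) / (1 + ρ) / (1 + (1 - ρ) / (1 + ρ)) = (1 - ρ) / 2 := by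
  field_simp
  ring

lemma quarter_lt_threshold_load {ρ : ℝ} (hρ : 0 < ρ) :
    1 / 4 < ρ / (1 + ρ) + ((1 - ρ) / 2) ^ 2 := by
  rw [div_add' _ _ _ (by positivity), lt_div_iff₀ (by positivity)]
  nlinarith [sq_nonneg (ρ - 1 / 2)]

theorem stmt_9_general (ρ v : ℝ) (hρ : 0 < ρ) (hρ1 : ρ < 1)
    (h : ρ * v / (1 - ρ) + v ^ 2 / (1 + v) ^ 2 ≤ 1 / 4) :
    v < (1 - ρ) / (1 + ρ) := by
  by_contra! hv
  have hv₀ : 0 < (1 - ρ) / (1 + ρ) := div_pos (by linarith) (by linarith)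
  have linear_term : ρ / (1 + ρ) ≤ ρ * v / (1 - ρ) :=
    calc ρ / (1 + ρ) = ρ * ((1 - ρ) / (1 + ρ)) / (1 - ρ) := by
          field_simp [show 1 - ρ ≠ 0 by linarith]
      _ ≤ ρ * v / (1 - ρ) := by gcongr
  have quadratic_term : ((1 - ρ) / 2) ^ 2 ≤ v ^ 2 / (1 + v) ^ 2 := by
    rw [← div_pow, ← threshold_div_one_add_self (by positivity)]
    exact pow_le_pow_left₀ (div_pos hv₀ (by positivity)).le
      (div_one_add_self_le_div_one_add_self hv₀.le hv) 2
  linarith [quarter_lt_threshold_load hρ]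

theorem stmt_9 (ρ v : ℝ) (hρ : 0 < ρ) (hρ1 : ρ < 1) (hv : 0 < v) (hv1 : v < 1)
    (h : ρ * v / (1 - ρ) + v ^ 2 / (1 + v) ^ 2 ≤ 1 / 4) :
    v < (1 - ρ) / (1 + ρ) :=
  stmt_9_general ρ v hρ hρ1 h
end

section
/- For a nonadaptive input instance, any trajectory x: [0,T] → [-1,1] that is 1-Lipschitz and visits points x_0, x_1, …, x_n at times k_0 < k_1 < ⋯ < k_n can be matched by a piecewise trajectory with speed in {0,1} (alternating waiting and unit-speed motion): there exists a 1-Lipschitz function y: [0,T] → [-1,1] with |y'| ∈ {0,1} almost everywhere, y(k_i) = x_i for all 0 ≤ i ≤ n. -/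
/-!
Move from `x i` towards `x (i + 1)` at unit speed from time `k i` on, then wait; since
`|x (i + 1) - x i| ≤ k (i + 1) - k i` the motion is over by time `k (i + 1)`. The path is `x 0` plus
a sum of signed ramps `t ↦ min t b - min t a` living in disjoint time windows, so its increments
are bounded by those of the single ramp from `k 0` to `k n`, which is 1-Lipschitz. Off the finitely
many switching times the path is locally constant or affine of slope `±1`.
-/

open Finset MeasureTheory Set Topology

/-- For `a ≤ b`, the distance covered by time `t` when moving at unit speed exactly during
`[a, b]`. -/
def ramp (a b t : ℝ) : ℝ := min t b - min t a

lemma ramp_add (a b c t : ℝ) : ramp a b t + ramp b c t = ramp a c t := by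
  unfold ramp; ring

lemma ramp_of_le_left {a b t : ℝ} (hab : a ≤ b) (ht : t ≤ a) : ramp a b t = 0 := by
  simp [ramp, min_eq_left ht, min_eq_left (ht.trans hab)]

lemma ramp_of_right_le {a b t : ℝ} (hab : a ≤ b) (ht : b ≤ t) : ramp a b t = b - a := by
  simp [ramp, min_eq_right ht, min_eq_right (hab.trans ht)]

lemma ramp_of_mem_Icc {a b t : ℝ} (ht : t ∈ Icc a b) : ramp a b t = t - a := by
  simp [ramp, min_eq_left ht.2, min_eq_right ht.1]

lemma ramp_mem_Icc {a b : ℝ} (hab : a ≤ b) (t : ℝ) : ramp a b t ∈ Icc 0 (b - a) := by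
  unfold ramp; constructor <;> simp only [min_def] <;> split_ifs <;> linarith

lemma ramp_monotone {a b : ℝ} (hab : a ≤ b) : Monotone (ramp a b) := by
  intro s t hst; unfold ramp; simp only [min_def]; split_ifs <;> linarith

lemma ramp_sub_ramp_le (a b : ℝ) {s t : ℝ} (hst : s ≤ t) : ramp a b t - ramp a b s ≤ t - s := by
  unfold ramp; simp only [min_def]; split_ifs <;> linarith

lemma sum_range_ramp (a : ℕ → ℝ) (n : ℕ) (t : ℝ) :
    ∑ i ∈ range n, ramp (a i) (a (i + 1)) t = ramp (a 0) (a n) t :=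
  Finset.sum_range_sub (fun i => min t (a i)) n

lemma hasDerivAt_ramp {a b t : ℝ} (hab : a ≤ b) (ha : t ≠ a) (hb : t ≠ b) :
    HasDerivAt (ramp a b) ((Ioo a b).indicator 1 t) t := by
  rcases ha.lt_or_gt with hta | hat
  · rw [indicator_of_notMem (fun h => hta.not_gt h.1)]
    refine (hasDerivAt_const t 0).congr_of_eventuallyEq ?_
    filter_upwards [Iio_mem_nhds hta] with s hs using ramp_of_le_left hab (le_of_lt hs)
  rcases hb.lt_or_gt with htb | hbt
  · rw [indicator_of_mem (show t ∈ Ioo a b from ⟨hat, htb⟩), Pi.one_apply]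
    refine ((hasDerivAt_id t).sub_const a).congr_of_eventuallyEq ?_
    filter_upwards [Ioo_mem_nhds hat htb] with s hs using ramp_of_mem_Icc (Ioo_subset_Icc_self hs)
  · rw [indicator_of_notMem (fun h => hbt.not_gt h.2)]
    refine (hasDerivAt_const t (b - a)).congr_of_eventuallyEq ?_
    filter_upwards [Ioi_mem_nhds hbt] with s hs using ramp_of_right_le hab (le_of_lt hs)

lemma abs_coe_signType_le_one (s : SignType) : |(s : ℝ)| ≤ 1 := by
  cases s <;> simp

lemma le_or_ge_or_exists_mem_Icc (a : ℕ → ℝ) (n : ℕ) (t : ℝ) :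
    t ≤ a 0 ∨ a n ≤ t ∨ ∃ j < n, t ∈ Icc (a j) (a (j + 1)) := by
  induction n with
  | zero => exact (le_total t (a 0)).imp_right Or.inl
  | succ n ih =>
    rcases ih with h | h | ⟨j, hj, hmem⟩
    · exact Or.inl h
    · rcases le_total (a (n + 1)) t with h' | h'
      · exact Or.inr (Or.inl h')
      · exact Or.inr (Or.inr ⟨n, n.lt_succ_self, h, h'⟩)
    · exact Or.inr (Or.inr ⟨j, hj.trans n.lt_succ_self, hmem⟩)

def arrival (a X : ℕ → ℝ) (i : ℕ) : ℝ := a i + |X (i + 1) - X i|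

noncomputable def leg (a X : ℕ → ℝ) (i : ℕ) (t : ℝ) : ℝ :=
  SignType.sign (X (i + 1) - X i) * ramp (a i) (arrival a X i) t

noncomputable def extremeSpeedPath (n : ℕ) (a X : ℕ → ℝ) (t : ℝ) : ℝ :=
  X 0 + ∑ i ∈ range n, leg a X i t

section extremeSpeedPath

variable {n : ℕ} {a X : ℕ → ℝ}

lemma le_arrival (a X : ℕ → ℝ) (i : ℕ) : a i ≤ arrival a X i :=
  le_add_of_nonneg_right (abs_nonneg _)

lemma arrival_le (hX : ∀ i < n, |X (i + 1) - X i| ≤ a (i + 1) - a i) {i : ℕ} (hi : i < n) :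
    arrival a X i ≤ a (i + 1) := by
  unfold arrival; linarith [hX i hi]

lemma leg_of_le {i : ℕ} {t : ℝ} (ht : t ≤ a i) : leg a X i t = 0 := by
  rw [leg, ramp_of_le_left (le_arrival a X i) ht, mul_zero]

lemma leg_of_arrival_le {i : ℕ} {t : ℝ} (ht : arrival a X i ≤ t) :
    leg a X i t = X (i + 1) - X i := by
  rw [leg, ramp_of_right_le (le_arrival a X i) ht, arrival, add_sub_cancel_left, sign_mul_abs]

lemma sum_Ico_leg_eq_zero (ha : Monotone a) {m : ℕ} {t : ℝ} (ht : t ≤ a m) :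
    ∑ i ∈ Ico m n, leg a X i t = 0 :=
  Finset.sum_eq_zero fun _ hi => leg_of_le (ht.trans (ha (mem_Ico.1 hi).1))

lemma sum_range_leg (ha : Monotone a) (hX : ∀ i < n, |X (i + 1) - X i| ≤ a (i + 1) - a i)
    {m : ℕ} (hm : m ≤ n) {t : ℝ} (ht : a m ≤ t) :
    ∑ i ∈ range m, leg a X i t = X m - X 0 := by
  rw [← Finset.sum_range_sub X m]
  refine Finset.sum_congr rfl fun i hi => leg_of_arrival_le ?_
  have hi : i < m := mem_range.1 hi
  exact (arrival_le hX (hi.trans_le hm)).trans ((ha hi).trans ht)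

lemma extremeSpeedPath_of_le (ha : Monotone a) {t : ℝ} (ht : t ≤ a 0) :
    extremeSpeedPath n a X t = X 0 := by
  rw [extremeSpeedPath, range_eq_Ico, sum_Ico_leg_eq_zero ha ht, add_zero]

lemma extremeSpeedPath_of_ge (ha : Monotone a) (hX : ∀ i < n, |X (i + 1) - X i| ≤ a (i + 1) - a i)
    {t : ℝ} (ht : a n ≤ t) : extremeSpeedPath n a X t = X n := by
  rw [extremeSpeedPath, sum_range_leg ha hX le_rfl ht, add_sub_cancel]

lemma extremeSpeedPath_of_mem_Icc (ha : Monotone a)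
    (hX : ∀ i < n, |X (i + 1) - X i| ≤ a (i + 1) - a i) {j : ℕ} (hj : j < n) {t : ℝ}
    (ht : t ∈ Icc (a j) (a (j + 1))) : extremeSpeedPath n a X t = X j + leg a X j t := by
  rw [extremeSpeedPath, ← sum_range_add_sum_Ico _ hj.le, sum_eq_sum_Ico_succ_bot hj,
    sum_range_leg ha hX hj.le ht.1, sum_Ico_leg_eq_zero ha ht.2]
  ring

lemma extremeSpeedPath_apply (ha : Monotone a)
    (hX : ∀ i < n, |X (i + 1) - X i| ≤ a (i + 1) - a i) {j : ℕ} (hj : j ≤ n) :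
    extremeSpeedPath n a X (a j) = X j := by
  rcases hj.lt_or_eq with hj | rfl
  · rw [extremeSpeedPath_of_mem_Icc ha hX hj ⟨le_rfl, ha j.le_succ⟩, leg_of_le le_rfl, add_zero]
  · exact extremeSpeedPath_of_ge ha hX le_rfl

lemma abs_leg_sub_leg_le (i : ℕ) {s t : ℝ} (hst : s ≤ t) :
    |leg a X i t - leg a X i s| ≤ ramp (a i) (arrival a X i) t - ramp (a i) (arrival a X i) s := by
  have hr := sub_nonneg.2 (ramp_monotone (le_arrival a X i) hst)
  rw [leg, leg, ← mul_sub, abs_mul, abs_of_nonneg hr]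
  exact mul_le_of_le_one_left hr (abs_coe_signType_le_one _)

lemma abs_extremeSpeedPath_sub_le
    (hX : ∀ i < n, |X (i + 1) - X i| ≤ a (i + 1) - a i) {s t : ℝ} (hst : s ≤ t) :
    |extremeSpeedPath n a X t - extremeSpeedPath n a X s| ≤ t - s := calc
  _ = |∑ i ∈ range n, (leg a X i t - leg a X i s)| := by
    rw [extremeSpeedPath, extremeSpeedPath, add_sub_add_left_eq_sub, sum_sub_distrib]
  _ ≤ ∑ i ∈ range n,
      (ramp (a i) (arrival a X i) t - ramp (a i) (arrival a X i) s) :=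
    (abs_sum_le_sum_abs _ _).trans (sum_le_sum fun i _ => abs_leg_sub_leg_le i hst)
  _ ≤ ∑ i ∈ range n, (ramp (a i) (a (i + 1)) t - ramp (a i) (a (i + 1)) s) :=
    sum_le_sum fun i hi => by
      rw [← ramp_add (a i) (arrival a X i) (a (i + 1)) t,
        ← ramp_add (a i) (arrival a X i) (a (i + 1)) s]
      linarith [ramp_monotone (arrival_le hX (mem_range.1 hi)) hst]
  _ = ramp (a 0) (a n) t - ramp (a 0) (a n) s := by
    rw [sum_sub_distrib, sum_range_ramp, sum_range_ramp]
  _ ≤ t - s := ramp_sub_ramp_le _ _ hst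

lemma lipschitzWith_extremeSpeedPath
    (hX : ∀ i < n, |X (i + 1) - X i| ≤ a (i + 1) - a i) :
    LipschitzWith 1 (extremeSpeedPath n a X) := by
  refine LipschitzWith.of_le_add fun s t => ?_
  rw [Real.dist_eq]
  rcases le_total s t with hst | hts
  · linarith [neg_abs_le (extremeSpeedPath n a X t - extremeSpeedPath n a X s),
      abs_extremeSpeedPath_sub_le hX hst, neg_le_abs (s - t)]
  · linarith [le_abs_self (extremeSpeedPath n a X s - extremeSpeedPath n a X t),
      abs_extremeSpeedPath_sub_le hX hts, le_abs_self (s - t)]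

lemma add_leg_mem_uIcc (i : ℕ) (t : ℝ) : X i + leg a X i t ∈ uIcc (X i) (X (i + 1)) := by
  obtain ⟨h0, h1⟩ := ramp_mem_Icc (le_arrival a X i) t
  rw [leg, Set.mem_uIcc]
  generalize ramp (a i) (arrival a X i) t = r at h0 h1
  rw [arrival, add_sub_cancel_left] at h1
  rcases lt_trichotomy (X (i + 1) - X i) 0 with h | h | h
  · rw [sign_neg h, SignType.coe_neg_one, abs_of_neg h] at *
    right; constructor <;> linarith
  · rw [h, sign_zero, SignType.coe_zero]
    left; constructor <;> linarith
  · rw [sign_pos h, SignType.coe_one, abs_of_pos h] at *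
    left; constructor <;> linarith

lemma extremeSpeedPath_mem (ha : Monotone a) (hX : ∀ i < n, |X (i + 1) - X i| ≤ a (i + 1) - a i)
    {s : Set ℝ} [s.OrdConnected] (hXs : ∀ i ≤ n, X i ∈ s) (t : ℝ) :
    extremeSpeedPath n a X t ∈ s := by
  rcases le_or_ge_or_exists_mem_Icc a n t with h | h | ⟨j, hj, hmem⟩
  · rw [extremeSpeedPath_of_le ha h]; exact hXs 0 n.zero_le
  · rw [extremeSpeedPath_of_ge ha hX h]; exact hXs n le_rfl
  · rw [extremeSpeedPath_of_mem_Icc ha hX hj hmem]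
    exact OrdConnected.uIcc_subset ‹_› (hXs j hj.le) (hXs (j + 1) hj) (add_leg_mem_uIcc j t)

lemma hasDerivAt_extremeSpeedPath (ha : Monotone a)
    (hX : ∀ i < n, |X (i + 1) - X i| ≤ a (i + 1) - a i) {j : ℕ} (hj : j < n) {t : ℝ}
    (ht : t ∈ Ioo (a j) (a (j + 1))) (ht' : t ≠ arrival a X j) :
    HasDerivAt (extremeSpeedPath n a X)
      (SignType.sign (X (j + 1) - X j) * (Ioo (a j) (arrival a X j)).indicator 1 t) t := by
  refine (((hasDerivAt_ramp (le_arrival a X j) ht.1.ne' ht').const_mul _).const_add (X j))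
    |>.congr_of_eventuallyEq ?_
  filter_upwards [Ioo_mem_nhds ht.1 ht.2] with s hs
  exact extremeSpeedPath_of_mem_Icc ha hX hj (Ioo_subset_Icc_self hs)

lemma ae_deriv_extremeSpeedPath (ha : Monotone a)
    (hX : ∀ i < n, |X (i + 1) - X i| ≤ a (i + 1) - a i) :
    ∀ᵐ t : ℝ, deriv (extremeSpeedPath n a X) t = 0 ∨ |deriv (extremeSpeedPath n a X) t| = 1 := by
  have hS : (Set.range a ∪ Set.range (arrival a X)).Countable :=
    (countable_range a).union (countable_range _)
  filter_upwards [hS.ae_notMem volume] with t ht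
  simp only [mem_union, Set.mem_range, not_or, not_exists] at ht
  obtain ⟨hta, htb⟩ := ht
  rcases le_or_ge_or_exists_mem_Icc a n t with h | h | ⟨j, hj, hmem⟩
  · left
    have hconst : extremeSpeedPath n a X =ᶠ[𝓝 t] fun _ => X 0 := by
      filter_upwards [Iio_mem_nhds (h.lt_of_ne (Ne.symm (hta 0)))] with s hs
      exact extremeSpeedPath_of_le ha hs.le
    rw [hconst.deriv_eq, deriv_const]
  · left
    have hconst : extremeSpeedPath n a X =ᶠ[𝓝 t] fun _ => X n := by
      filter_upwards [Ioi_mem_nhds (h.lt_of_ne (hta n))] with s hs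
      exact extremeSpeedPath_of_ge ha hX hs.le
    rw [hconst.deriv_eq, deriv_const]
  · have ht : t ∈ Ioo (a j) (a (j + 1)) :=
      ⟨hmem.1.lt_of_ne (hta j), hmem.2.lt_of_ne (Ne.symm (hta (j + 1)))⟩
    rw [(hasDerivAt_extremeSpeedPath ha hX hj ht (Ne.symm (htb j))).deriv]
    by_cases hj' : t ∈ Ioo (a j) (arrival a X j)
    · rw [indicator_of_mem hj', Pi.one_apply, mul_one]
      cases SignType.sign (X (j + 1) - X j) <;> simp
    · rw [indicator_of_notMem hj', mul_zero]
      exact Or.inl rfl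

end extremeSpeedPath

theorem stmt_14 (n : ℕ) (k x : Fin (n + 1) → ℝ) (hk : StrictMono k)
    (hx : ∀ i, x i ∈ Set.Icc (-1 : ℝ) 1)
    (hlip : ∀ i j, |x i - x j| ≤ |k i - k j|) :
    ∃ y : ℝ → ℝ, LipschitzWith 1 y ∧ (∀ t, y t ∈ Set.Icc (-1 : ℝ) 1) ∧
      (∀ i, y (k i) = x i) ∧
      (∀ᵐ t : ℝ, deriv y t = 0 ∨ |deriv y t| = 1) := by
  set a : ℕ → ℝ := fun i => k (Fin.clamp i n)
  set X : ℕ → ℝ := fun i => x (Fin.clamp i n)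
  have ha : Monotone a := hk.monotone.comp Fin.clamp_monotone
  have hX : ∀ i < n, |X (i + 1) - X i| ≤ a (i + 1) - a i := fun i _ =>
    (hlip _ _).trans_eq (abs_of_nonneg (sub_nonneg.2 (ha i.le_succ)))
  have hclamp : ∀ i : Fin (n + 1), Fin.clamp i n = i := fun i =>
    Fin.ext (min_eq_left i.is_le)
  refine ⟨extremeSpeedPath n a X, lipschitzWith_extremeSpeedPath hX,
    extremeSpeedPath_mem ha hX fun i _ => hx _, fun i => ?_, ae_deriv_extremeSpeedPath ha hX⟩
  simpa [a, X, hclamp] using extremeSpeedPath_apply ha hX i.is_le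
end
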